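/- For closed subspaces M, N of a Hilbert space, the Friedrichs angle cosine satisfies c[M,N] = ‖P_M P_N − P_{M∩N}‖, where P denotes orthogonal projection. -/

import Mathlib

noncomputable section

open scoped InnerProductSpace ENNReal

variable {H K : Type*} [NormedAddCommGroup H] [InnerProductSpace ℂ H] [CompleteSpace H]
  [NormedAddCommGroup K] [InnerProductSpace ℂ K] [CompleteSpace K]

/-- Orthogonal projection onto (the closure of) a subspace, as an operator `H →L[ℂ] H`. -/
def sproj (M : Submodule ℂ H) : H →L[ℂ] H :=
  M.topologicalClosure.subtypeL ∘L M.topologicalClosure.orthogonalProjectionOnto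

/-- The reduced minimum modulus of a bounded operator. -/
def gammaRMM (T : H →L[ℂ] K) : ℝ :=
  sInf ((fun x => ‖T x‖) '' {x : H | x ∈ (LinearMap.ker (T : H →ₗ[ℂ] K))ᗮ ∧ ‖x‖ = 1})

/-- `M ⊖ N`. -/
def ominus (M N : Submodule ℂ H) : Submodule ℂ H := M ⊓ (M ⊓ N)ᗮ

open Classical in
/-- The cosine of the Friedrichs angle between two subspaces. -/
def angleCos (M N : Submodule ℂ H) : ℝ :=
  if M ≤ N ∨ N ≤ M then 0
  else sSup {r : ℝ | ∃ x ∈ ominus M N, ∃ y ∈ ominus N M,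
    ‖x‖ = 1 ∧ ‖y‖ = 1 ∧ r = ‖(inner ℂ x y : ℂ)‖}

/-- The sine of the Friedrichs angle. -/
def angleSin (M N : Submodule ℂ H) : ℝ := Real.sqrt (1 - angleCos M N ^ 2)

variable {I : Type*}

/-- `(w i, W i)` is a fusion frame (frame of subspaces) with bounds `A`, `B`. -/
def IsFusionFrameWith (w : I → ℝ) (W : I → Submodule ℂ H) (A B : ℝ) : Prop :=
  0 < A ∧ 0 < B ∧ (∀ i, IsClosed (W i : Set H)) ∧
    ∀ f : H, A * ‖f‖ ^ 2 ≤ ∑' i, w i ^ 2 * ‖sproj (W i) f‖ ^ 2 ∧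
      ∑' i, w i ^ 2 * ‖sproj (W i) f‖ ^ 2 ≤ B * ‖f‖ ^ 2

/-- `(w i, W i)` is a fusion frame for some bounds. -/
def IsFusionFrame (w : I → ℝ) (W : I → Submodule ℂ H) : Prop :=
  ∃ A B : ℝ, IsFusionFrameWith w W A B

/-- a family of mutually orthogonal closed subspaces with dense span. -/
def IsOBS (E : I → Submodule ℂ H) : Prop :=
  (∀ i, IsClosed (E i : Set H)) ∧
  (∀ i j, i ≠ j → ∀ x ∈ E i, ∀ y ∈ E j, (inner ℂ x y : ℂ) = 0) ∧
  (⨆ i, E i).topologicalClosure = ⊤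

/-- A minimal sequence of subspaces. -/
def IsMinimal (W : I → Submodule ℂ H) : Prop :=
  ∀ i, W i ⊓ (⨆ j ∈ {j : I | j ≠ i}, W j).topologicalClosure = ⊥

/-- The kernel of the synthesis operator of `(w i, W i)`, as a subspace of `⊕₂ W i`. -/
def synthesisKernel (w : I → ℝ) (W : I → Submodule ℂ H) :
    Submodule ℂ (lp (fun i => W i) 2) where
  carrier := {g | ∀ f : H, HasSum (fun i => (w i : ℂ) * (inner ℂ ((g i : H)) f : ℂ)) 0}
  zero_mem' := by
    intro f
    have : (fun i => (w i : ℂ) * (inner ℂ (((0 : lp (fun i => W i) 2) i : H)) f : ℂ)) =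
        fun _ => 0 := by
      funext i; simp [lp.coeFn_zero]
    rw [this]; exact hasSum_zero
  add_mem' := by
    intro a b ha hb f
    have h := (ha f).add (hb f)
    rw [add_zero] at h
    have he : (fun i => (w i : ℂ) * (inner ℂ (((a + b) i : H)) f : ℂ)) =
        fun i => (w i : ℂ) * (inner ℂ ((a i : H)) f : ℂ) +
          (w i : ℂ) * (inner ℂ ((b i : H)) f : ℂ) := by
      funext i
      have h2 : ((a + b) i : ↥(W i)) = a i + b i := by rw [lp.coeFn_add]; rfl
      rw [h2, Submodule.coe_add, inner_add_left]; ring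
    rw [he]; exact h
  smul_mem' := by
    intro c a ha f
    have h := (ha f).mul_left (starRingEnd ℂ c)
    rw [mul_zero] at h
    have he : (fun i => (w i : ℂ) * (inner ℂ (((c • a) i : H)) f : ℂ)) =
        fun i => (starRingEnd ℂ c) * ((w i : ℂ) * (inner ℂ ((a i : H)) f : ℂ)) := by
      funext i
      have h2 : ((c • a) i : ↥(W i)) = c • a i := by rw [lp.coeFn_smul]; rfl
      rw [h2, Submodule.coe_smul, inner_smul_left]; ring
    rw [he]; exact h

/-- The excess of a fusion frame. -/
def fusionExcess (w : I → ℝ) (W : I → Submodule ℂ H) : Cardinal :=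
  Module.rank ℂ (synthesisKernel w W)


/-!
Write `L = M ⊓ N`. Since `L ≤ M` and `L ≤ N`, the projections onto `A = M ⊖ N` and `B = N ⊖ M`
are `P_M - P_L` and `P_N - P_L`, and their product is `P_M P_N - P_L`. The Friedrichs cosine of
`M, N` is the Dixmier cosine `sup |⟪x, y⟫|` over unit vectors `x ∈ A`, `y ∈ B`, and for any two
subspaces this supremum equals `‖P_A P_B‖`: one inequality from `⟪x, y⟫ = ⟪x, P_A P_B y⟫`, the
other from `‖P_A y‖² = ⟪P_A y, y⟫`. When `M ≤ N` or `N ≤ M`, one of `A, B` is `⊥` and the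
supremum over the empty set is `0` in `ℝ`, matching the first branch of `angleCos`.
-/

section Projections

variable {𝕜 E : Type*} [RCLike 𝕜] [NormedAddCommGroup E] [InnerProductSpace 𝕜 E]

namespace Submodule

theorem hasOrthogonalProjection_of_isClosed [CompleteSpace E] {K : Submodule 𝕜 E}
    (hK : IsClosed (K : Set E)) : K.HasOrthogonalProjection :=
  have := hK.isComplete.completeSpace_coe
  .ofCompleteSpace K

variable {U V W : Submodule 𝕜 E} [U.HasOrthogonalProjection] [V.HasOrthogonalProjection]
  [W.HasOrthogonalProjection]

theorem starProjection_inf_orthogonal [(V ⊓ Uᗮ).HasOrthogonalProjection] (h : U ≤ V) :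
    (V ⊓ Uᗮ).starProjection = V.starProjection - U.starProjection := by
  ext x
  rw [sub_apply]
  have hV : x - V.starProjection x ∈ Vᗮ := sub_starProjection_mem_orthogonal x
  have hU : x - U.starProjection x ∈ Uᗮ := sub_starProjection_mem_orthogonal x
  refine eq_starProjection_of_mem_orthogonal ⟨?_, ?_⟩ ?_
  · exact V.sub_mem (V.starProjection_apply_mem x) (h (U.starProjection_apply_mem x))
  · simpa using Uᗮ.sub_mem hU (orthogonal_le h hV)
  · have hU' : U.starProjection x ∈ (V ⊓ Uᗮ)ᗮ :=
      orthogonal_le inf_le_right (U.le_orthogonal_orthogonal (U.starProjection_apply_mem x))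
    simpa [sub_sub_eq_add_sub, add_sub_right_comm] using
      (V ⊓ Uᗮ)ᗮ.add_mem (orthogonal_le inf_le_left hV) hU'

theorem starProjection_comp_starProjection_of_ge (h : U ≤ V) :
    V.starProjection ∘L U.starProjection = U.starProjection :=
  ContinuousLinearMap.ext fun x =>
    starProjection_eq_self_iff.2 (h (U.starProjection_apply_mem x))

theorem starProjection_sub_comp_starProjection_sub (hU : W ≤ U) (hV : W ≤ V) :
    (U.starProjection - W.starProjection) ∘L (V.starProjection - W.starProjection) =
      U.starProjection ∘L V.starProjection - W.starProjection := by
  have hWU : U.starProjection * W.starProjection = W.starProjection :=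
    starProjection_comp_starProjection_of_ge hU
  have hWV : W.starProjection * V.starProjection = W.starProjection :=
    starProjection_comp_starProjection_of_le hV
  simp only [← ContinuousLinearMap.mul_def]
  rw [mul_sub, sub_mul, sub_mul, hWU, hWV, (isIdempotentElem_starProjection W).eq]
  abel

end Submodule

def dixmierCos (A B : Submodule 𝕜 E) : ℝ :=
  sSup {r : ℝ | ∃ x ∈ A, ∃ y ∈ B, ‖x‖ = 1 ∧ ‖y‖ = 1 ∧ r = ‖⟪x, y⟫_𝕜‖}

variable {A B : Submodule 𝕜 E}

@[simp]
theorem dixmierCos_bot_left : dixmierCos (⊥ : Submodule 𝕜 E) B = 0 := by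
  simp [dixmierCos]

@[simp]
theorem dixmierCos_bot_right : dixmierCos A (⊥ : Submodule 𝕜 E) = 0 := by
  simp [dixmierCos]

theorem dixmierCos_nonneg : 0 ≤ dixmierCos A B :=
  Real.sSup_nonneg fun _ ⟨_, _, _, _, _, _, hr⟩ => hr ▸ norm_nonneg _

theorem norm_inner_le_dixmierCos_mul {x y : E} (hx : x ∈ A) (hy : y ∈ B) :
    ‖⟪x, y⟫_𝕜‖ ≤ dixmierCos A B * ‖x‖ * ‖y‖ := by
  rcases eq_or_ne x 0 with rfl | hx0
  · simp
  rcases eq_or_ne y 0 with rfl | hy0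
  · simp
  have hbdd : BddAbove {r : ℝ | ∃ x ∈ A, ∃ y ∈ B, ‖x‖ = 1 ∧ ‖y‖ = 1 ∧ r = ‖⟪x, y⟫_𝕜‖} := by
    refine ⟨1, ?_⟩
    rintro _ ⟨x, -, y, -, hx1, hy1, rfl⟩
    simpa [hx1, hy1] using norm_inner_le_norm (𝕜 := 𝕜) x y
  have hle := le_csSup hbdd ⟨_, A.smul_mem _ hx, _, B.smul_mem _ hy,
    norm_smul_inv_norm hx0, norm_smul_inv_norm hy0, rfl⟩
  rw [inner_smul_left, inner_smul_right, norm_mul, norm_mul, RCLike.norm_conj, norm_inv,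
    norm_inv, RCLike.norm_ofReal, RCLike.norm_ofReal, abs_norm, abs_norm] at hle
  rw [mul_assoc]
  calc ‖⟪x, y⟫_𝕜‖ = (‖x‖⁻¹ * (‖y‖⁻¹ * ‖⟪x, y⟫_𝕜‖)) * (‖x‖ * ‖y‖) := by field_simp
    _ ≤ dixmierCos A B * (‖x‖ * ‖y‖) := by gcongr; exact hle

theorem dixmierCos_eq_norm_starProjection_comp [A.HasOrthogonalProjection]
    [B.HasOrthogonalProjection] :
    dixmierCos A B = ‖A.starProjection ∘L B.starProjection‖ := by
  set T := A.starProjection ∘L B.starProjection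
  refine le_antisymm (Real.sSup_le ?_ (norm_nonneg T))
    (T.opNorm_le_bound dixmierCos_nonneg fun z => ?_)
  · rintro _ ⟨x, hx, y, hy, hx1, hy1, rfl⟩
    have hxy : ⟪x, y⟫_𝕜 = ⟪x, T y⟫_𝕜 := by
      rw [ContinuousLinearMap.comp_apply, ← A.inner_starProjection_left_eq_right,
        Submodule.starProjection_eq_self_iff.2 hx, Submodule.starProjection_eq_self_iff.2 hy]
    calc ‖⟪x, y⟫_𝕜‖ ≤ ‖x‖ * ‖T y‖ := hxy ▸ norm_inner_le_norm x (T y)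
      _ ≤ ‖T‖ := by simpa [hx1, hy1] using T.le_opNorm y
  · set y := B.starProjection z
    set x := A.starProjection y
    have hx : x ∈ A := A.starProjection_apply_mem y
    have hsq : ‖x‖ * ‖x‖ ≤ ‖x‖ * (dixmierCos A B * ‖y‖) := by
      calc ‖x‖ * ‖x‖ = ‖⟪x, y⟫_𝕜‖ := by
            rw [← A.starProjection_eq_self_iff.2 hx, A.inner_starProjection_left_eq_right,
              A.starProjection_eq_self_iff.2 hx, inner_self_eq_norm_sq_to_K]
            simp [sq]
        _ ≤ ‖x‖ * (dixmierCos A B * ‖y‖) := by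
          linarith [norm_inner_le_dixmierCos_mul hx (B.starProjection_apply_mem z)]
    calc ‖T z‖ = ‖x‖ := rfl
      _ ≤ dixmierCos A B * ‖y‖ := by
        rcases (norm_nonneg x).eq_or_lt with h0 | hpos
        · rw [← h0]; exact mul_nonneg dixmierCos_nonneg (norm_nonneg y)
        · exact le_of_mul_le_mul_left hsq hpos
      _ ≤ dixmierCos A B * ‖z‖ := by
        gcongr
        · exact dixmierCos_nonneg
        · exact B.norm_starProjection_apply_le z

end Projections

section Angle

variable {E : Type*} [NormedAddCommGroup E] [InnerProductSpace ℂ E]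

theorem ominus_eq_bot_of_le {M N : Submodule ℂ E} (h : M ≤ N) : ominus M N = ⊥ := by
  rw [ominus, inf_eq_left.2 h, Submodule.inf_orthogonal_eq_bot]

theorem angleCos_eq_dixmierCos (M N : Submodule ℂ E) :
    angleCos M N = dixmierCos (M ⊓ (M ⊓ N)ᗮ) (N ⊓ (M ⊓ N)ᗮ) := by
  have hNM : ominus N M = N ⊓ (M ⊓ N)ᗮ := by rw [ominus, inf_comm N M]
  rw [angleCos, ← hNM]
  split_ifs with h
  · rcases h with h | h
    · rw [← ominus, ominus_eq_bot_of_le h, dixmierCos_bot_left]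
    · rw [ominus_eq_bot_of_le h, dixmierCos_bot_right]
  · rfl

end Angle

theorem sproj_eq_starProjection {M : Submodule ℂ H} (hM : IsClosed (M : Set H))
    [M.HasOrthogonalProjection] : sproj M = M.starProjection := by
  have key : ∀ (U : Submodule ℂ H) [U.HasOrthogonalProjection], U = M →
      U.starProjection = M.starProjection := by
    rintro U _ rfl; rfl
  exact key _ hM.submodule_topologicalClosure_eq

theorem angleCos_eq_norm_proj_comp (M N : Submodule ℂ H)
    (hM : IsClosed (M : Set H)) (hN : IsClosed (N : Set H)) :
    angleCos M N = ‖sproj M ∘L sproj N - sproj (M ⊓ N)‖ := by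
  open Submodule in
  have hL : IsClosed ((M ⊓ N : Submodule ℂ H) : Set H) := hM.inter hN
  have := hasOrthogonalProjection_of_isClosed hM
  have := hasOrthogonalProjection_of_isClosed hN
  have := hasOrthogonalProjection_of_isClosed hL
  have := hasOrthogonalProjection_of_isClosed (K := M ⊓ (M ⊓ N)ᗮ)
    (hM.inter (isClosed_orthogonal _))
  have := hasOrthogonalProjection_of_isClosed (K := N ⊓ (M ⊓ N)ᗮ)
    (hN.inter (isClosed_orthogonal _))
  rw [angleCos_eq_dixmierCos, dixmierCos_eq_norm_starProjection_comp,
    starProjection_inf_orthogonal inf_le_left, starProjection_inf_orthogonal inf_le_right,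
    starProjection_sub_comp_starProjection_sub inf_le_left inf_le_right,
    sproj_eq_starProjection hM, sproj_eq_starProjection hN, sproj_eq_starProjection hL]
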